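/- Repair of conjunctions of negative constraints: let C_1, …, C_n be finite directed multigraphs and for each i let P_i be a binary relation on directed multigraphs that is total (for every G there is H with P_i G H), decreasing (P_i G H implies there exists an injective morphism H → G), and a repair relation for the negative constraint ∄C_i (P_i G H implies there is no injective morphism C_i → H). Then the sequential composition P_1 ; … ; P_n is total, and whenever (P_1 ; … ; P_n) G H there is no injective morphism C_i → H for any i = 1, …, n. -/

import Mathlib

/-- A directed multigraph: a set of nodes, a set of edges, and source/target maps. -/
structure DMGraph : Type 1 where
  V : Type
  E : Type
  s : E → V
  t : E → V

/-- A morphism of directed multigraphs: maps on nodes and edges compatible with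
sources and targets. -/
structure GraphHom (G H : DMGraph) : Type where
  fV : G.V → H.V
  fE : G.E → H.E
  src : ∀ e, H.s (fE e) = fV (G.s e)
  tgt : ∀ e, H.t (fE e) = fV (G.t e)

/-- Composition of graph morphisms. -/
def GraphHom.comp {G H K : DMGraph} (g : GraphHom H K) (f : GraphHom G H) :
    GraphHom G K where
  fV := g.fV ∘ f.fV
  fE := g.fE ∘ f.fE
  src e := by simp [g.src, f.src]
  tgt e := by simp [g.tgt, f.tgt]

/-- A graph morphism is injective if it is injective on nodes and on edges. -/
def GraphHom.Injective {G H : DMGraph} (f : GraphHom G H) : Prop :=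
  Function.Injective f.fV ∧ Function.Injective f.fE

/-- A graph is finite if its node set and edge set are finite. -/
def DMGraph.Finite (G : DMGraph) : Prop :=
  _root_.Finite G.V ∧ _root_.Finite G.E

/-- Sequential (relational) composition of a list of binary relations. -/
def SeqComp {X : Type*} : List (X → X → Prop) → (X → X → Prop)
  | [] => fun G H => G = H
  | P :: Ps => fun G H => ∃ M, P G M ∧ SeqComp Ps M H

/-!
The repair step `P i` leaves a graph into which `C i` does not embed, and every later step,
being decreasing, only passes to a graph embedding into the previous one; a copy of `C i`
there would compose to a copy in the earlier graph.
-/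

def DMGraph.Embeds (H G : DMGraph) : Prop :=
  ∃ m : GraphHom H G, m.Injective

theorem GraphHom.Injective.comp {G H K : DMGraph} {g : GraphHom H K} {f : GraphHom G H}
    (hg : g.Injective) (hf : f.Injective) : (g.comp f).Injective :=
  ⟨hg.1.comp hf.1, hg.2.comp hf.2⟩

namespace DMGraph

theorem Embeds.trans {G H K : DMGraph} (hGH : G.Embeds H) (hHK : H.Embeds K) : G.Embeds K :=
  let ⟨f, hf⟩ := hGH
  let ⟨g, hg⟩ := hHK
  ⟨g.comp f, hg.comp hf⟩

theorem not_embeds_of_embeds {C G H : DMGraph} (hHG : H.Embeds G) (hCG : ¬ C.Embeds G) :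
    ¬ C.Embeds H :=
  fun hCH => hCG (hCH.trans hHG)

end DMGraph

section SeqComp

variable {X : Type*}

theorem exists_seqComp {L : List (X → X → Prop)} (hL : ∀ Q ∈ L, ∀ G, ∃ H, Q G H) (G : X) :
    ∃ H, SeqComp L G H := by
  induction L generalizing G with
  | nil => exact ⟨G, rfl⟩
  | cons Q Qs ih =>
    obtain ⟨M, hM⟩ := hL Q List.mem_cons_self G
    obtain ⟨H, hH⟩ := ih (fun R hR => hL R (List.mem_cons_of_mem Q hR)) M
    exact ⟨H, M, hM, hH⟩

theorem seqComp_preserves {S : X → Prop} {L : List (X → X → Prop)}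
    (hL : ∀ Q ∈ L, ∀ G H, Q G H → S G → S H) {G H : X} (hGH : SeqComp L G H) (hG : S G) :
    S H := by
  induction L generalizing G with
  | nil => exact hGH ▸ hG
  | cons Q Qs ih =>
    obtain ⟨M, hGM, hMH⟩ := hGH
    exact ih (fun R hR => hL R (List.mem_cons_of_mem Q hR)) hMH
      (hL Q List.mem_cons_self G M hGM hG)

theorem seqComp_establishes {S : X → Prop} {L : List (X → X → Prop)}
    (hL : ∀ Q ∈ L, ∀ G H, Q G H → S G → S H) {Q : X → X → Prop} (hQ : Q ∈ L)
    (hQS : ∀ G H, Q G H → S H) {G H : X} (hGH : SeqComp L G H) : S H := by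
  induction L generalizing G with
  | nil => cases hQ
  | cons R Rs ih =>
    obtain ⟨M, hGM, hMH⟩ := hGH
    have hRs : ∀ Q ∈ Rs, ∀ G H, Q G H → S G → S H :=
      fun Q' hQ' => hL Q' (List.mem_cons_of_mem R hQ')
    rcases List.mem_cons.mp hQ with rfl | hQRs
    · exact seqComp_preserves hRs hMH (hQS G M hGM)
    · exact ih hRs hQRs hMH

end SeqComp

theorem negative_conjunction_repair_general {n : ℕ} (C : Fin n → DMGraph)
    (P : Fin n → DMGraph → DMGraph → Prop)
    (htotal : ∀ i, ∀ G, ∃ H, P i G H)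
    (hdec : ∀ i, ∀ G H, P i G H → ∃ m : GraphHom H G, m.Injective)
    (hrepair : ∀ i, ∀ G H, P i G H → ¬ ∃ q : GraphHom (C i) H, q.Injective) :
    (∀ G, ∃ H, SeqComp (List.ofFn P) G H) ∧
    (∀ G H, SeqComp (List.ofFn P) G H →
      ∀ i, ¬ ∃ q : GraphHom (C i) H, q.Injective) := by
  refine ⟨exists_seqComp (List.forall_mem_ofFn_iff.mpr htotal), fun G H hGH i => ?_⟩
  have hpreserved : ∀ Q ∈ List.ofFn P, ∀ K K', Q K K' →
      ¬ (C i).Embeds K → ¬ (C i).Embeds K' :=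
    List.forall_mem_ofFn_iff.mpr fun j K K' hstep =>
      DMGraph.not_embeds_of_embeds (hdec j K K' hstep)
  exact seqComp_establishes hpreserved (List.mem_ofFn.mpr ⟨i, rfl⟩) (hrepair i) hGH

/-- Repair of conjunctions of negative constraints: if each `P i` is total,
decreasing, and a repair relation for the negative constraint `∄ C i`, then the
sequential composition `P 0 ; … ; P (n-1)` is total and every result `H` admits no
injective morphism from any `C i`. -/
theorem negative_conjunction_repair {n : ℕ} (C : Fin n → DMGraph)
    (hC : ∀ i, (C i).Finite)
    (P : Fin n → DMGraph → DMGraph → Prop)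
    (htotal : ∀ i, ∀ G, ∃ H, P i G H)
    (hdec : ∀ i, ∀ G H, P i G H → ∃ m : GraphHom H G, m.Injective)
    (hrepair : ∀ i, ∀ G H, P i G H → ¬ ∃ q : GraphHom (C i) H, q.Injective) :
    (∀ G, ∃ H, SeqComp (List.ofFn P) G H) ∧
    (∀ G H, SeqComp (List.ofFn P) G H →
      ∀ i, ¬ ∃ q : GraphHom (C i) H, q.Injective) :=
  negative_conjunction_repair_general C P htotal hdec hrepair
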